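/- In the asymptotic regime, let (d_N) and (f_N) be sequences with d_N → ∞, d_N < 𝔞_N, f_N > 2 and f_N·d_N ≤ 𝔞_N. Then for all sufficiently large N: (R_{⌊𝔞_N⌋} − R_{⌊𝔞_N − d_N⌋}) / (R_{⌊𝔞_N⌋} − R_{⌊𝔞_N − f_N·d_N⌋}) ≤ exp( −(f_N − 2)·d_N²·u_N / 𝔞_N² ). -/

import Mathlib

open Real Filter Set

/-- Birth rate `λ_n` of the two-type Moran model. -/
noncomputable def lamR (N : ℕ) (s : ℝ) (n : ℕ) : ℝ :=
  (n:ℝ) * ((1/2) * (1 - (n:ℝ)/(N:ℝ)) + s * (1 - (n:ℝ)/(N:ℝ)))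

/-- Death rate `μ_n` of the two-type Moran model. -/
noncomputable def muR (N : ℕ) (m : ℝ) (n : ℕ) : ℝ :=
  (n:ℝ) * ((1/2) * (1 - (n:ℝ)/(N:ℝ)) + m)

/-- Odds-ratio products `r_l = ∏_{i=1}^l μ_i/λ_i`. -/
noncomputable def rR (N : ℕ) (m s : ℝ) (l : ℕ) : ℝ :=
  ∏ i ∈ Finset.Icc 1 l, muR N m i / lamR N s i

/-- Potential `U(n) = ∑_{ℓ=1}^n log(μ_ℓ/λ_ℓ)`. -/
noncomputable def UR (N : ℕ) (m s : ℝ) (n : ℕ) : ℝ :=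
  ∑ l ∈ Finset.Icc 1 n, Real.log (muR N m l / lamR N s l)

/-- `R_k = ∑_{i=0}^{k-1} r_i`. -/
noncomputable def RRk (N : ℕ) (m s : ℝ) (k : ℕ) : ℝ :=
  ∑ i ∈ Finset.range k, rR N m s i

/-- Center of attraction `𝔞 = N(1-ρ)`. -/
noncomputable def aN (N : ℕ) (m s : ℝ) : ℝ := (N:ℝ) * (1 - m/s)

/-- Critical size `𝔠 = 1/(s-m)`. -/
noncomputable def cN (m s : ℝ) : ℝ := 1/(s - m)

/-- `u = N m (1-ρ)²`. -/
noncomputable def uN (N : ℕ) (m s : ℝ) : ℝ := (N:ℝ) * m * (1 - m/s)^2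

/-- Fluctuation scale `σ = (1/s)√(Nm)`. -/
noncomputable def sigN (N : ℕ) (m s : ℝ) : ℝ := (1/s) * Real.sqrt ((N:ℝ) * m)

lemma gaussR (n : ℕ) : (∑ l ∈ Finset.range (n+1), (l:ℝ)) = n*(n+1)/2 := by
  induction n with
  | zero => simp
  | succ k ih => rw [Finset.sum_range_succ, ih]; push_cast; ring

lemma lam_pos (N : ℕ) (s : ℝ) (hs : 0 < s) (l : ℕ) (h1 : 1 ≤ l) (hl : (l:ℝ) < N) :
    0 < lamR N s l := by
  have h0 : (0:ℝ) < l := by exact_mod_cast h1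
  have hN : (0:ℝ) < N := lt_trans h0 hl
  have hx : 0 < 1 - (l:ℝ)/N := by
    rw [sub_pos, div_lt_one hN]; exact hl
  unfold lamR
  positivity

lemma mu_pos (N : ℕ) (m : ℝ) (hm : 0 < m) (l : ℕ) (h1 : 1 ≤ l) (hl : (l:ℝ) ≤ N) :
    0 < muR N m l := by
  have h0 : (0:ℝ) < l := by exact_mod_cast h1
  have hN : (0:ℝ) < N := lt_of_lt_of_le h0 hl
  have hx : 0 ≤ 1 - (l:ℝ)/N := by
    rw [sub_nonneg, div_le_one hN]; exact hl
  unfold muR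
  have h2 : 0 < (1/2:ℝ) * (1 - (l:ℝ)/N) + m := by positivity
  positivity

lemma rR_pos (N : ℕ) (m s : ℝ) (hm : 0 < m) (hms : m < s) (i : ℕ) (hi : (i:ℝ) < N) :
    0 < rR N m s i := by
  apply Finset.prod_pos
  intro l hl
  rw [Finset.mem_Icc] at hl
  have hlc : (l:ℝ) ≤ i := by exact_mod_cast hl.2
  exact div_pos (mu_pos N m hm l hl.1 (le_of_lt (lt_of_le_of_lt hlc hi)))
    (lam_pos N s (hm.trans hms) l hl.1 (lt_of_le_of_lt hlc hi))

lemma factor_le (N : ℕ) (m s a : ℝ) (l : ℕ)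
    (hm : 0 < m) (hmslt : m < s) (hs : s ≤ 1/2)
    (ha : a = (N:ℝ) * (1 - m/s)) (haN : a < N)
    (h1 : 1 ≤ l) (hl : (l:ℝ) < a) :
    muR N m l / lamR N s l ≤ Real.exp (-(m * (a - l)/N)) := by
  have hs0 : 0 < s := hm.trans hmslt
  have hlN : (l:ℝ) < N := hl.trans haN
  have hl0 : (0:ℝ) < l := by exact_mod_cast h1
  have hN0 : (0:ℝ) < N := lt_trans hl0 hlN
  have hlam : 0 < lamR N s l := lam_pos N s hs0 l h1 hlN
  have hmu : 0 < muR N m l := mu_pos N m hm l h1 hlN.le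
  have hx1 : (l:ℝ)/N ≤ 1 := by rw [div_le_one hN0]; exact hlN.le
  have hx0 : 0 ≤ 1 - (l:ℝ)/N := by linarith
  have hid : lamR N s l * (1 - m*(a - l)/N) - muR N m l
      = ((l:ℝ)*(a - l)/N) * (s - (1 - (l:ℝ)/N)*(1/2+s)*m) := by
    unfold lamR muR
    rw [ha]
    field_simp
    ring
  have hlN0 : (0:ℝ) ≤ (l:ℝ)/N := by positivity
  have hx1' : 1 - (l:ℝ)/N ≤ 1 := by linarith
  have e1 : (1 - (l:ℝ)/N)*(1/2+s) ≤ 1 :=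
    mul_le_one₀ hx1' (by linarith) (by linarith)
  have e2 : ((1 - (l:ℝ)/N)*(1/2+s))*m ≤ 1*m := mul_le_mul_of_nonneg_right e1 hm.le
  have hfac2 : 0 ≤ s - (1 - (l:ℝ)/N)*(1/2+s)*m := by
    have : (1 - (l:ℝ)/N)*(1/2+s)*m ≤ m := by linarith [e2]
    linarith
  have hfac1 : 0 ≤ (l:ℝ)*(a - l)/N := by
    apply div_nonneg _ hN0.le
    exact mul_nonneg hl0.le (by linarith)
  have hprod : 0 ≤ ((l:ℝ)*(a - l)/N) * (s - (1 - (l:ℝ)/N)*(1/2+s)*m) :=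
    mul_nonneg hfac1 hfac2
  have hkey : muR N m l ≤ lamR N s l * (1 - m*(a - l)/N) := by linarith
  have hstep : muR N m l / lamR N s l ≤ 1 - m*(a - l)/N := by
    rw [div_le_iff₀ hlam]; linarith
  calc muR N m l / lamR N s l ≤ 1 - m*(a - l)/N := hstep
    _ ≤ Real.exp (-(m * (a - l)/N)) := by
        have := Real.add_one_le_exp (-(m * (a - l)/N))
        linarith

lemma quad_lb (d f S : ℝ) (hd2 : 2 ≤ d) (hf : 2 < f) (hS0 : 0 ≤ S)
    (hSlb : (f-1)*d - 1 ≤ S) : (f-2)*d^2 ≤ S*(S+1)/2 := by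
  have hd0' : (0:ℝ) < d := by linarith
  have hSlb2 : (f - 3/2)*d ≤ S := by nlinarith
  have hsq : ((f - 3/2)*d) * ((f - 3/2)*d) ≤ S * S :=
    mul_self_le_mul_self (by nlinarith) hSlb2
  nlinarith [sq_nonneg ((f - 5/2)*d)]

lemma sum_Ioc_lb (a : ℝ) (S i : ℕ) (hSi : S ≤ i) (hia : (i:ℝ) + 1 ≤ a) :
    (S:ℝ)*((S:ℝ)+1)/2 ≤ ∑ l ∈ Finset.Ioc (i - S) i, (a - (l:ℝ)) := by
  set j := i - S with hj_def
  have hji : j ≤ i := Nat.sub_le _ _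
  have hjR : (j:ℝ) = (i:ℝ) - S := by rw [hj_def, Nat.cast_sub hSi]
  have hcard : (Finset.Ioc j i).card = S := by
    rw [Nat.card_Ioc]; omega
  have hsumL : (∑ l ∈ Finset.Ioc j i, (l:ℝ)) = (i:ℝ)*(i+1)/2 - (j:ℝ)*(j+1)/2 := by
    rw [← Finset.Ico_add_one_add_one_eq_Ioc, Finset.sum_Ico_eq_sub _ (Nat.add_le_add_right hji 1),
      gaussR i, gaussR j]
  have hT : (∑ l ∈ Finset.Ioc j i, (a - (l:ℝ)))
      = S * a - ((i:ℝ)*(i+1)/2 - (j:ℝ)*(j+1)/2) := by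
    rw [Finset.sum_sub_distrib, hsumL, Finset.sum_const, hcard, nsmul_eq_mul]
  rw [hT, hjR]
  have hS0 : (0:ℝ) ≤ S := Nat.cast_nonneg _
  nlinarith [mul_nonneg hS0 (by linarith : (0:ℝ) ≤ a - (i:ℝ) - 1)]

/-- The main quantitative lemma for a fixed `N`. -/
lemma key_lemma (N : ℕ) (m s d f a : ℝ)
    (hm : 0 < m) (hmslt : m < s) (hs : s ≤ 1/2)
    (ha : a = (N:ℝ) * (1 - m/s))
    (hd2 : 2 ≤ d) (hda : d < a) (hf : 2 < f) (hfd : f * d ≤ a) :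
    (RRk N m s ⌊a⌋₊ - RRk N m s ⌊a - d⌋₊)
      / (RRk N m s ⌊a⌋₊ - RRk N m s ⌊a - f * d⌋₊)
    ≤ Real.exp (-(f - 2) * d^2 * m / N) := by
  have hs0 : 0 < s := hm.trans hmslt
  have hρ1 : m/s < 1 := (div_lt_one hs0).2 hmslt
  have hρ0 : 0 < m/s := div_pos hm hs0
  have ha2 : 2 < a := lt_of_le_of_lt hd2 hda
  have hN0 : (0:ℝ) < N := by
    by_contra h
    push_neg at h
    have h2 : (N:ℝ)*(1-m/s) ≤ 0 := by nlinarith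
    rw [← ha] at h2; linarith
  have haN : a < N := by rw [ha]; nlinarith [mul_pos hN0 hρ0]
  have hfd0 : (0:ℝ) ≤ a - f*d := by linarith
  have hd0 : (0:ℝ) ≤ a - d := by nlinarith
  obtain ⟨A, hA_def⟩ : ∃ A, A = ⌊a⌋₊ := ⟨_, rfl⟩
  obtain ⟨B, hB_def⟩ : ∃ B, B = ⌊a - d⌋₊ := ⟨_, rfl⟩
  obtain ⟨C, hC_def⟩ : ∃ C, C = ⌊a - f*d⌋₊ := ⟨_, rfl⟩
  rw [← hA_def, ← hB_def, ← hC_def]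
  have hAa : (A:ℝ) ≤ a := hA_def ▸ Nat.floor_le (by linarith)
  have haA : a < A + 1 := hA_def ▸ Nat.lt_floor_add_one a
  have hBb : (B:ℝ) ≤ a - d := hB_def ▸ Nat.floor_le hd0
  have hbB : a - d < B + 1 := hB_def ▸ Nat.lt_floor_add_one _
  have hCc : (C:ℝ) ≤ a - f*d := hC_def ▸ Nat.floor_le hfd0
  have hCB : C ≤ B := by
    rw [hB_def, hC_def]
    exact Nat.floor_le_floor (by nlinarith)
  have hBA : B < A := by
    have h1 : (B:ℝ) < A := by linarith
    exact_mod_cast h1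
  obtain ⟨S, hS_def⟩ : ∃ S, S = B - C := ⟨_, rfl⟩
  have hSB : S ≤ B := hS_def ▸ Nat.sub_le _ _
  have hSR : (S:ℝ) = (B:ℝ) - C := by
    rw [hS_def, Nat.cast_sub hCB]
  have hSlb : (f-1)*d - 1 ≤ (S:ℝ) := by rw [hSR]; linarith
  obtain ⟨E, hE_def⟩ : ∃ E, E = Real.exp (-(f-2)*d^2*m/N) := ⟨_, rfl⟩
  rw [← hE_def]
  have hE0 : 0 < E := hE_def ▸ Real.exp_pos _
  -- per-index bound
  have keyi : ∀ i ∈ Finset.Ico B A, rR N m s i ≤ E * rR N m s (i - S) := by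
    intro i hi
    rw [Finset.mem_Ico] at hi
    have hSi : S ≤ i := le_trans hSB hi.1
    have hji : i - S ≤ i := Nat.sub_le _ _
    have hjR : ((i - S : ℕ):ℝ) = (i:ℝ) - S := by rw [Nat.cast_sub hSi]
    have hia : (i:ℝ) + 1 ≤ a := by
      have h' : (i:ℝ) + 1 ≤ A := by exact_mod_cast hi.2
      linarith
    have hsplit : rR N m s i
        = rR N m s (i - S) * ∏ l ∈ Finset.Ioc (i - S) i, (muR N m l / lamR N s l) := by
      unfold rR
      have hicc : ∀ k : ℕ, Finset.Icc 1 k = Finset.Ioc 0 k := by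
        intro k; ext x; simp [Finset.mem_Icc, Finset.mem_Ioc]; omega
      rw [hicc i, hicc (i - S)]
      rw [Finset.prod_Ioc_consecutive _ (Nat.zero_le (i - S)) hji]
    have hprod : ∏ l ∈ Finset.Ioc (i - S) i, (muR N m l / lamR N s l)
        ≤ ∏ l ∈ Finset.Ioc (i - S) i, Real.exp (-(m * (a - l)/N)) := by
      apply Finset.prod_le_prod
      · intro l hl
        rw [Finset.mem_Ioc] at hl
        have h1 : 1 ≤ l := Nat.one_le_iff_ne_zero.2 (by omega)
        have hlc : (l:ℝ) ≤ i := by exact_mod_cast hl.2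
        have hlN : (l:ℝ) < N := by linarith
        exact le_of_lt (div_pos (mu_pos N m hm l h1 hlN.le) (lam_pos N s hs0 l h1 hlN))
      · intro l hl
        rw [Finset.mem_Ioc] at hl
        have h1 : 1 ≤ l := Nat.one_le_iff_ne_zero.2 (by omega)
        have hlc : (l:ℝ) ≤ i := by exact_mod_cast hl.2
        exact factor_le N m s a l hm hmslt hs ha haN h1 (by linarith)
    rw [← Real.exp_sum] at hprod
    have hTlb : (f-2)*d^2 ≤ ∑ l ∈ Finset.Ioc (i - S) i, (a - (l:ℝ)) := by
      have h1 := sum_Ioc_lb a S i hSi hia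
      have h2 := quad_lb d f (S:ℝ) hd2 hf (Nat.cast_nonneg _) hSlb
      linarith
    have hsum : (∑ l ∈ Finset.Ioc (i - S) i, -(m * (a - (l:ℝ))/N)) ≤ -(f-2)*d^2*m/N := by
      have heq : (∑ l ∈ Finset.Ioc (i - S) i, -(m * (a - (l:ℝ))/N))
          = -(m/N) * (∑ l ∈ Finset.Ioc (i - S) i, (a - (l:ℝ))) := by
        rw [Finset.mul_sum]
        exact Finset.sum_congr rfl (fun l _ => by ring)
      rw [heq]
      have hmN : (0:ℝ) < m/N := by positivity
      have h3 := mul_le_mul_of_nonneg_left hTlb hmN.le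
      have h4 : -(m / N) * ∑ l ∈ Finset.Ioc (i - S) i, (a - (l:ℝ))
          ≤ -(m / N * ((f - 2) * d ^ 2)) := by linarith
      calc -(m / N) * ∑ l ∈ Finset.Ioc (i - S) i, (a - (l:ℝ))
          ≤ -(m / N * ((f - 2) * d ^ 2)) := h4
        _ = -(f-2)*d^2*m/N := by ring
    have hjN : ((i - S : ℕ):ℝ) < N := by
      rw [hjR]
      have h4 : (0:ℝ) ≤ S := Nat.cast_nonneg _
      linarith
    have hrj : 0 < rR N m s (i - S) := rR_pos N m s hm hmslt _ hjN
    calc rR N m s i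
        = rR N m s (i - S) * ∏ l ∈ Finset.Ioc (i - S) i, (muR N m l / lamR N s l) := hsplit
      _ ≤ rR N m s (i - S) * Real.exp (∑ l ∈ Finset.Ioc (i - S) i, -(m * (a - (l:ℝ))/N)) :=
          mul_le_mul_of_nonneg_left hprod hrj.le
      _ ≤ rR N m s (i - S) * E := by
          apply mul_le_mul_of_nonneg_left _ hrj.le
          rw [hE_def]
          exact Real.exp_le_exp.2 hsum
      _ = E * rR N m s (i - S) := mul_comm _ _
  -- assemble
  have hCA : C ≤ A := le_of_lt (lt_of_le_of_lt hCB hBA)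
  have hNum : RRk N m s A - RRk N m s B = ∑ i ∈ Finset.Ico B A, rR N m s i :=
    (Finset.sum_Ico_eq_sub _ hBA.le).symm
  have hDen : RRk N m s A - RRk N m s C = ∑ i ∈ Finset.Ico C A, rR N m s i :=
    (Finset.sum_Ico_eq_sub _ hCA).symm
  have hBC : B = C + S := by omega
  have hAS : A = (A - S) + S := by omega
  have hshift : (∑ i ∈ Finset.Ico B A, rR N m s (i - S))
      = ∑ i ∈ Finset.Ico C (A - S), rR N m s i := by
    have hmap : Finset.Ico B A = (Finset.Ico C (A - S)).map (addRightEmbedding S) := by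
      rw [Finset.map_add_right_Ico, ← hBC, ← hAS]
    rw [hmap, Finset.sum_map]
    exact Finset.sum_congr rfl (fun i _ => by simp [addRightEmbedding])
  have hsub : (∑ i ∈ Finset.Ico C (A - S), rR N m s i) ≤ ∑ i ∈ Finset.Ico C A, rR N m s i := by
    apply Finset.sum_le_sum_of_subset_of_nonneg
    · exact Finset.Ico_subset_Ico le_rfl (Nat.sub_le _ _)
    · intro i hi _
      rw [Finset.mem_Ico] at hi
      have h' : (i:ℝ) < A := by exact_mod_cast hi.2
      exact (rR_pos N m s hm hmslt i (by linarith)).le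
  have hDpos : 0 < ∑ i ∈ Finset.Ico C A, rR N m s i := by
    apply Finset.sum_pos
    · intro i hi
      rw [Finset.mem_Ico] at hi
      have h' : (i:ℝ) < A := by exact_mod_cast hi.2
      exact rR_pos N m s hm hmslt i (by linarith)
    · exact Finset.nonempty_Ico.2 (lt_of_le_of_lt hCB hBA)
  have hchain : (∑ i ∈ Finset.Ico B A, rR N m s i)
      ≤ E * ∑ i ∈ Finset.Ico C A, rR N m s i := by
    calc (∑ i ∈ Finset.Ico B A, rR N m s i)
        ≤ ∑ i ∈ Finset.Ico B A, E * rR N m s (i - S) := Finset.sum_le_sum keyi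
      _ = E * ∑ i ∈ Finset.Ico B A, rR N m s (i - S) := (Finset.mul_sum _ _ _).symm
      _ = E * ∑ i ∈ Finset.Ico C (A - S), rR N m s i := by rw [hshift]
      _ ≤ E * ∑ i ∈ Finset.Ico C A, rR N m s i := mul_le_mul_of_nonneg_left hsub hE0.le
  rw [hNum, hDen, div_le_iff₀ hDpos]
  linarith

theorem stmt12 (m s : ℕ → ℝ)
    (hms : ∀ N, 0 < m N ∧ m N < s N)
    (hNm : Filter.Tendsto (fun N : ℕ => (N:ℝ) * m N) Filter.atTop Filter.atTop)
    (hs0 : Filter.Tendsto s Filter.atTop (nhds 0))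
    (hρlim : ∃ ρs ∈ Set.Ioc (0:ℝ) 1,
      Filter.Tendsto (fun N => m N / s N) Filter.atTop (nhds ρs))
    (hu : Filter.Tendsto (fun N : ℕ => uN N (m N) (s N)) Filter.atTop Filter.atTop)
    (d f : ℕ → ℝ)
    (hd : Filter.Tendsto d Filter.atTop Filter.atTop)
    (hda : ∀ N, d N < aN N (m N) (s N))
    (hf : ∀ N, 2 < f N)
    (hfd : ∀ N, f N * d N ≤ aN N (m N) (s N)) :
    ∀ᶠ N : ℕ in Filter.atTop,
      (RRk N (m N) (s N) ⌊aN N (m N) (s N)⌋₊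
          - RRk N (m N) (s N) ⌊aN N (m N) (s N) - d N⌋₊)
        / (RRk N (m N) (s N) ⌊aN N (m N) (s N)⌋₊
          - RRk N (m N) (s N) ⌊aN N (m N) (s N) - f N * d N⌋₊)
      ≤ Real.exp (-(f N - 2) * (d N)^2 * uN N (m N) (s N) / (aN N (m N) (s N))^2) := by
  have hsev : ∀ᶠ N : ℕ in Filter.atTop, s N ≤ 1/2 := by
    have h2 : ∀ᶠ x : ℝ in nhds 0, x < 1/2 := by
      apply IsOpen.eventually_mem isOpen_Iio
      norm_num
    filter_upwards [hs0.eventually h2] with N h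
    exact le_of_lt h
  have hdev : ∀ᶠ N : ℕ in Filter.atTop, 2 ≤ d N := hd.eventually_ge_atTop 2
  filter_upwards [hsev, hdev] with N hsN hdN
  have hm := (hms N).1
  have hmslt := (hms N).2
  have hs0' : 0 < s N := hm.trans hmslt
  have key := key_lemma N (m N) (s N) (d N) (f N) (aN N (m N) (s N))
    hm hmslt hsN rfl hdN (hda N) (hf N) (hfd N)
  have ha2 : 2 < aN N (m N) (s N) := lt_of_le_of_lt hdN (hda N)
  have hρ1 : m N / s N < 1 := (div_lt_one hs0').2 hmslt
  have hN0 : (0:ℝ) < N := by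
    by_contra h
    push_neg at h
    have h2 : (N:ℝ)*(1 - m N/s N) ≤ 0 := by nlinarith
    have h3 : aN N (m N) (s N) = (N:ℝ)*(1 - m N/s N) := rfl
    rw [h3] at ha2; linarith
  have hexp : -(f N - 2) * (d N)^2 * uN N (m N) (s N) / (aN N (m N) (s N))^2
      = -(f N - 2) * (d N)^2 * m N / N := by
    have h3 : aN N (m N) (s N) = (N:ℝ)*(1 - m N/s N) := rfl
    have h4 : uN N (m N) (s N) = (N:ℝ)*m N*(1 - m N/s N)^2 := rfl
    have h1 : (1:ℝ) - m N/s N ≠ 0 := by linarith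
    have h2 : (N:ℝ) ≠ 0 := ne_of_gt hN0
    have h5 : s N ≠ 0 := ne_of_gt hs0'
    rw [h3, h4, mul_pow]
    rw [div_eq_div_iff (by positivity) hN0.ne']
    ring
  rw [hexp]
  exact key
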